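/- arXiv:1010.5206 — 5 statements merged into one kernel-verified Lean document; each statement's English description precedes it below -/
import Mathlib

section
/- For n ≥ k ≥ 1, if F is a family of subsets of an n-element set X such that every member of F has size at most n−k and no two nonempty members of F are disjoint, then |F| ≤ 2^{n-1} − Σ_{j=1}^{k-1} C(n−1, j). -/
open Finset

/-- A `d`-simplex: `d+1` sets whose total intersection is empty but such that
the intersection of any `d` of them is nonempty. -/
def IsSimplex {α : Type*} [DecidableEq α] (d : ℕ) (A : Fin (d + 1) → Finset α) : Prop :=
  (⋂ i, (A i : Set α)) = ∅ ∧
    ∀ j : Fin (d + 1), (⋂ i, ⋂ (_ : i ≠ j), (A i : Set α)).Nonempty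

/-- A family is `d`-simplex-free if it contains no `d`-simplex. -/
def SimplexFree {α : Type*} [DecidableEq α] (d : ℕ) (F : Finset (Finset α)) : Prop :=
  ¬ ∃ A : Fin (d + 1) → Finset α, (∀ i, A i ∈ F) ∧ IsSimplex d A

/-!
Without `∅` the family is intersecting; count it slice by slice, with `m = n - k` the largest
allowed size. A slice of size `c` with `2c < n` has at most `C(n-1, c-1)` members by
Erdős–Ko–Rado. The sizes left over, `n - m ≤ c ≤ m`, come in complementary pairs `c, n - c`:
complementation sends the `(n-c)`-slice to `c`-sets disjoint from the `c`-slice, so the two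
slices together have at most `C(n, c) = C(n-1, c-1) + C(n-1, n-c-1)` members. Hence
`|F| ≤ 1 + ∑_{i<m} C(n-1, i)`, and the symmetry `C(n-1, i) = C(n-1, n-1-i)` turns this into
`2^(n-1) - ∑_{j=1}^{k-1} C(n-1, j)`.
-/

lemma isSimplex_one_of_disjoint {α : Type*} [DecidableEq α] {A B : Finset α}
    (hA : A.Nonempty) (hB : B.Nonempty) (hAB : Disjoint A B) : IsSimplex 1 ![A, B] := by
  refine ⟨?_, Fin.forall_fin_two.2 ⟨?_, ?_⟩⟩
  · simpa [Set.iInter_eq_empty_iff, or_iff_not_imp_left] using Finset.disjoint_left.mp hAB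
  · simpa [Fin.forall_fin_two, Finset.Nonempty] using hB
  · simpa [Fin.forall_fin_two, Finset.Nonempty] using hA

lemma SimplexFree.intersecting_erase_empty {α : Type*} [DecidableEq α] {F : Finset (Finset α)}
    (hF : SimplexFree 1 F) : ((F.erase ∅ : Finset (Finset α)) : Set (Finset α)).Intersecting := by
  intro A hA B hB hAB
  rw [mem_coe, mem_erase, ← nonempty_iff_ne_empty] at hA hB
  exact hF ⟨![A, B], Fin.forall_fin_two.2 ⟨hA.2, hB.2⟩, isSimplex_one_of_disjoint hA.1 hB.1 hAB⟩

lemma Finset.sum_Icc_le_sum_Icc_of_add_reflect_le {f g : ℕ → ℕ} {a b n : ℕ} (hn : a + b = n)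
    (h : ∀ c ∈ Icc a b, f c + f (n - c) ≤ g c + g (n - c)) :
    ∑ c ∈ Icc a b, f c ≤ ∑ c ∈ Icc a b, g c := by
  have reflect (φ : ℕ → ℕ) : ∑ c ∈ Icc a b, φ (n - c) = ∑ c ∈ Icc a b, φ c := by
    refine sum_nbij' (n - ·) (n - ·) ?_ ?_ ?_ ?_ (fun _ _ => rfl) <;>
      intro c hc <;> simp only [mem_Icc] at * <;> omega
  have := sum_le_sum h
  rw [sum_add_distrib, sum_add_distrib, reflect, reflect] at this
  omega

lemma Nat.choose_pred_add_choose_pred_sub {n c : ℕ} (hc : 1 ≤ c) (hcn : c < n) :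
    (n - 1).choose (c - 1) + (n - 1).choose (n - c - 1) = n.choose c := by
  obtain ⟨c, rfl⟩ : ∃ c', c = c' + 1 := ⟨c - 1, by omega⟩
  obtain ⟨n, rfl⟩ : ∃ n', n = n' + 1 := ⟨n - 1, by omega⟩
  rw [Nat.add_sub_cancel, Nat.add_sub_cancel, show n + 1 - (c + 1) - 1 = n - (c + 1) by omega,
    Nat.choose_symm (by omega), Nat.choose_succ_succ]

lemma Nat.sum_range_choose_add_sum_range_choose {m a b : ℕ} (h : a + b = m + 1) :
    ∑ i ∈ range a, m.choose i + ∑ j ∈ range b, m.choose j = 2 ^ m := by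
  have hb : ∑ j ∈ range b, m.choose j = ∑ i ∈ Ico a (m + 1), m.choose i := by
    have := sum_Ico_reflect (m.choose ·) 0 (by omega : b ≤ m + 1)
    rw [Nat.sub_zero, show m + 1 - b = a by omega] at this
    rw [← this, range_eq_Ico]
    exact sum_congr rfl fun j hj => (Nat.choose_symm (by simp at hj; omega)).symm
  rw [hb, sum_range_add_sum_Ico _ (by omega), Nat.sum_range_choose]

open scoped FinsetFamily

section Fintype

variable {β : Type*} [DecidableEq β] [Fintype β] {𝒜 : Finset (Finset β)}

theorem Finset.erdos_ko_rado_of_fintype {r : ℕ} (h𝒜 : (𝒜 : Set (Finset β)).Intersecting)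
    (hr : (𝒜 : Set (Finset β)).Sized r) (h : r ≤ Fintype.card β / 2) :
    #𝒜 ≤ (Fintype.card β - 1).choose (r - 1) := by
  let e := (Fintype.equivFin β).finsetCongr
  have := erdos_ko_rado (𝒜 := 𝒜.map e.toEmbedding) ?_ ?_ h
  · simpa using this
  · rw [coe_map]
    rintro _ ⟨s, hs, rfl⟩ _ ⟨t, ht, rfl⟩
    simpa [e, Equiv.finsetCongr_apply] using h𝒜 hs ht
  · rw [coe_map]
    rintro _ ⟨s, hs, rfl⟩
    simpa [e, Equiv.finsetCongr_apply] using hr hs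

lemma Set.Intersecting.card_slice_add_card_slice_le (h𝒜 : (𝒜 : Set (Finset β)).Intersecting)
    {c : ℕ} (hc : c ≤ Fintype.card β) :
    #(𝒜 # c) + #(𝒜 # (Fintype.card β - c)) ≤ (Fintype.card β).choose c := by
  have hdisj : Disjoint (𝒜 # c) (𝒜 # (Fintype.card β - c))ᶜˢ :=
    h𝒜.disjoint_map_compl.mono slice_subset (map_subset_map.2 slice_subset)
  rw [← card_compls (𝒜 # (Fintype.card β - c)), ← card_union_of_disjoint hdisj]
  refine Set.Sized.card_le ?_
  rw [coe_union, Set.sized_union]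
  exact ⟨sized_slice, (sized_compls hc).2 sized_slice⟩

theorem Finset.card_le_sum_range_choose_of_intersecting (h𝒜 : (𝒜 : Set (Finset β)).Intersecting)
    {m : ℕ} (hm : m < Fintype.card β) (hsize : ∀ A ∈ 𝒜, #A ≤ m) :
    #𝒜 ≤ ∑ i ∈ range m, (Fintype.card β - 1).choose i := by
  set n := Fintype.card β
  have hslices : #𝒜 = ∑ c ∈ Icc 1 m, #(𝒜 # c) := card_eq_sum_card_fiberwise fun A hA =>
    mem_Icc.2 ⟨card_pos.2 (nonempty_iff_ne_empty.2 (h𝒜.ne_bot hA)), hsize A hA⟩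
  have hshift : ∑ i ∈ range m, (n - 1).choose i = ∑ c ∈ Icc 1 m, (n - 1).choose (c - 1) := by
    rw [← Ico_add_one_right_eq_Icc, sum_Ico_eq_sum_range]
    simp only [Nat.add_sub_cancel, Nat.add_sub_cancel_left]
  have hlarge : {c ∈ Icc 1 m | ¬c < n - m} = Icc (n - m) m := by
    ext c
    simp only [mem_filter, mem_Icc]
    omega
  rw [hslices, hshift, ← sum_filter_add_sum_filter_not (Icc 1 m) (· < n - m), hlarge,
    ← sum_filter_add_sum_filter_not (Icc 1 m) (· < n - m), hlarge]
  refine add_le_add (sum_le_sum fun c hc => ?_)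
    (sum_Icc_le_sum_Icc_of_add_reflect_le (n := n) (by omega) fun c hc => ?_)
  · rw [mem_filter, mem_Icc] at hc
    exact erdos_ko_rado_of_fintype (h𝒜.mono (coe_subset.2 slice_subset)) sized_slice (by omega)
  · rw [mem_Icc] at hc
    rw [Nat.choose_pred_add_choose_pred_sub (by omega) (by omega)]
    exact h𝒜.card_slice_add_card_slice_le (by omega)

end Fintype

lemma Finset.exists_map_subtype_eq {α : Type*} [DecidableEq α] {X : Finset α}
    {𝒜 : Finset (Finset α)} (h : ∀ A ∈ 𝒜, A ⊆ X) :
    ∃ ℬ : Finset (Finset X),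
      ℬ.map (mapEmbedding (Function.Embedding.subtype (· ∈ X))).toEmbedding = 𝒜 := by
  refine ⟨𝒜.image (·.subtype (· ∈ X)), ?_⟩
  rw [map_eq_image, image_image]
  exact (image_congr fun A hA => subtype_map_of_mem (h A hA)).trans image_id'

theorem Finset.card_le_sum_range_choose_of_intersecting_of_subset {α : Type*} [DecidableEq α]
    {X : Finset α} {𝒜 : Finset (Finset α)} (h𝒜 : (𝒜 : Set (Finset α)).Intersecting)
    (hX : ∀ A ∈ 𝒜, A ⊆ X) {m : ℕ} (hm : m < #X) (hsize : ∀ A ∈ 𝒜, #A ≤ m) :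
    #𝒜 ≤ ∑ i ∈ range m, (#X - 1).choose i := by
  obtain ⟨ℬ, rfl⟩ := exists_map_subtype_eq hX
  rw [card_map, ← Fintype.card_coe X]
  refine card_le_sum_range_choose_of_intersecting ?_ (by simpa using hm) fun A hA => ?_
  · intro s hs t ht hst
    exact h𝒜 (mem_map_of_mem _ hs) (mem_map_of_mem _ ht) (by simpa using hst)
  · simpa using hsize _ (mem_map_of_mem _ hA)

theorem stmt1 {α : Type*} [DecidableEq α] (n k : ℕ) (hk : 1 ≤ k) (hkn : k ≤ n)
    (X : Finset α) (hX : X.card = n) (F : Finset (Finset α)) (hF : F ⊆ X.powerset)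
    (hsize : ∀ A ∈ F, A.card ≤ n - k) (hfree : SimplexFree 1 F) :
    F.card ≤ 2 ^ (n - 1) - ∑ j ∈ Finset.Icc 1 (k - 1), (n - 1).choose j := by
  have hbound := card_le_sum_range_choose_of_intersecting_of_subset hfree.intersecting_erase_empty
    (fun A hA => mem_powerset.1 (hF (mem_of_mem_erase hA))) (m := n - k) (by omega)
    (fun A hA => hsize A (mem_of_mem_erase hA))
  have htotal := Nat.sum_range_choose_add_sum_range_choose (m := n - 1) (a := n - k) (b := k)
    (by omega)
  have hsmall : ∑ j ∈ range k, (n - 1).choose j = 1 + ∑ j ∈ Icc 1 (k - 1), (n - 1).choose j := by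
    rw [sum_range_eq_add_Ico _ (by omega), ← Ico_add_one_right_eq_Icc, Nat.sub_add_cancel hk,
      Nat.choose_zero_right]
  have herase := pred_card_le_card_erase (s := F) (a := ∅)
  rw [hX] at hbound
  omega
end

section
/- Let n ≥ k ≥ 1 and d ≥ 2, and let F be a d-simplex-free family of subsets of an n-element set X, all of size at most n−k, containing some set Y of size exactly n−k. Then |F| ≤ f(n−k, d) + Σ_{i=1}^{k} C(k,i) · f(n−k, d−1, i), where f(m,d) is the maximum size of a d-simplex-free family of subsets of an m-element set, and f(m,d,i) is the maximum size of a d-simplex-free family of subsets of an m-element set all of whose members have size at most m−i. -/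
/-!
Split `F` according to the trace `S = A \ Y` of its members on the `k`-set `X \ Y`. The members
with `S = ∅` form a `d`-simplex-free family of subsets of `Y`. For `S ≠ ∅` the map `A ↦ A ∩ Y` is
injective on the fibre of `S`, its image consists of sets of size at most `|Y| - |S|`, and it is
`(d-1)`-simplex-free: a `(d-1)`-simplex `B₁, …, B_d` in it would give the `d`-simplex
`B₁ ∪ S, …, B_d ∪ S, Y` in `F`. Summing over the `C(k, i)` sets `S` of each size `i` gives the bound.
-/

open Finset

/-- The maximum size of a d-simplex-free family of subsets of an m-element set. -/
noncomputable def maxFree (m d : ℕ) : ℕ :=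
  sSup {s | ∃ F : Finset (Finset (Fin m)), SimplexFree d F ∧ F.card = s}

/-- The maximum size of a d-simplex-free family of subsets of an m-element set,
all of whose members have size at most m - i. -/
noncomputable def maxFreeLe (m d i : ℕ) : ℕ :=
  sSup {s | ∃ F : Finset (Finset (Fin m)), SimplexFree d F ∧
    (∀ A ∈ F, A.card ≤ m - i) ∧ F.card = s}

section

variable {α β : Type*}

lemma exists_embedding_fin_univ_map_eq (Y : Finset α) : ∃ φ : Fin Y.card ↪ α, univ.map φ = Y := by
  refine ⟨Y.equivFin.symm.toEmbedding.trans (Function.Embedding.subtype (· ∈ Y)), ?_⟩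
  ext x
  simp only [mem_map, mem_univ, true_and]
  exact ⟨by rintro ⟨a, rfl⟩; exact (Y.equivFin.symm a).2, fun h => ⟨Y.equivFin ⟨x, h⟩, by simp⟩⟩

lemma exists_map_eq_of_forall_subset_map [Fintype β] {φ : β ↪ α} {F : Finset (Finset α)}
    (hF : ∀ A ∈ F, A ⊆ univ.map φ) :
    ∃ G : Finset (Finset β), G.map (mapEmbedding φ).toEmbedding = F := by
  suffices F ⊆ univ.map (mapEmbedding φ).toEmbedding by
    obtain ⟨G, -, rfl⟩ := subset_map_iff.mp this
    exact ⟨G, rfl⟩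
  intro A hA
  obtain ⟨B, -, rfl⟩ := subset_map_iff.mp (hF A hA)
  exact mem_map_of_mem _ (mem_univ B)

lemma sum_powerset_le {T : Finset α} {f : Finset α → ℕ} {g : ℕ → ℕ}
    (h : ∀ S ⊆ T, S.Nonempty → f S ≤ g S.card) :
    ∑ S ∈ T.powerset, f S ≤ f ∅ + ∑ i ∈ Icc 1 T.card, T.card.choose i * g i := by
  rw [sum_powerset, Nat.range_succ_eq_Icc_zero, ← add_sum_Ioc_eq_sum_Icc (Nat.zero_le _),
    powersetCard_zero, sum_singleton]
  refine Nat.add_le_add_left (sum_le_sum fun i hi => ?_) _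
  calc ∑ S ∈ T.powersetCard i, f S ≤ ∑ S ∈ T.powersetCard i, g i := by
        refine sum_le_sum fun S hS => ?_
        obtain ⟨hST, rfl⟩ := mem_powersetCard.mp hS
        exact h S hST (card_pos.mp (mem_Ioc.mp hi).1)
    _ = T.card.choose i * g i := by rw [sum_const, card_powersetCard, smul_eq_mul]

variable [DecidableEq α]

lemma isSimplex_iff {d : ℕ} {A : Fin (d + 1) → Finset α} :
    IsSimplex d A ↔ (∀ x, ∃ i, x ∉ A i) ∧ ∀ j, ∃ x, ∀ i ≠ j, x ∈ A i := by
  simp only [IsSimplex, Set.eq_empty_iff_forall_notMem, Set.Nonempty, Set.mem_iInter,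
    Finset.mem_coe]
  push Not
  rfl

lemma SimplexFree.mono {d : ℕ} {F G : Finset (Finset α)} (hF : SimplexFree d F) (h : G ⊆ F) :
    SimplexFree d G :=
  fun ⟨A, hA, hs⟩ => hF ⟨A, fun i => h (hA i), hs⟩

lemma IsSimplex.map [DecidableEq β] {d : ℕ} {A : Fin (d + 1) → Finset β} (φ : β ↪ α)
    (hA : IsSimplex d A) : IsSimplex d fun i => (A i).map φ := by
  rw [isSimplex_iff] at hA ⊢
  obtain ⟨hempty, hcover⟩ := hA
  refine ⟨fun x => ?_, fun j => ?_⟩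
  · by_cases hx : ∃ y, φ y = x
    · obtain ⟨y, rfl⟩ := hx
      obtain ⟨i, hi⟩ := hempty y
      exact ⟨i, by simpa using hi⟩
    · refine ⟨0, fun h => hx ?_⟩
      obtain ⟨y, -, rfl⟩ := mem_map.mp h
      exact ⟨y, rfl⟩
  · obtain ⟨y, hy⟩ := hcover j
    exact ⟨φ y, fun i hi => mem_map_of_mem φ (hy i hi)⟩

lemma SimplexFree.of_map_mem [DecidableEq β] {d : ℕ} {F : Finset (Finset α)}
    {G : Finset (Finset β)} (φ : β ↪ α) (hF : SimplexFree d F) (hG : ∀ B ∈ G, B.map φ ∈ F) :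
    SimplexFree d G :=
  fun ⟨A, hA, hs⟩ => hF ⟨fun i => (A i).map φ, fun i => hG _ (hA i), hs.map φ⟩

lemma le_maxFreeLe {m d i : ℕ} {G : Finset (Finset (Fin m))} (hG : SimplexFree d G)
    (hsize : ∀ B ∈ G, B.card ≤ m - i) : G.card ≤ maxFreeLe m d i :=
  le_csSup ⟨Fintype.card (Finset (Fin m)), by rintro _ ⟨G, -, -, rfl⟩; exact card_le_univ G⟩
    ⟨G, hG, hsize, rfl⟩

lemma maxFreeLe_zero (m d : ℕ) : maxFreeLe m d 0 = maxFree m d := by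
  simp only [maxFreeLe, maxFree, Nat.sub_zero]
  congr 1
  ext s
  exact exists_congr fun G => and_congr_right fun _ =>
    and_iff_right fun B _ => by simpa using card_le_univ B

lemma card_le_maxFreeLe {d i : ℕ} {Y : Finset α} {F : Finset (Finset α)}
    (hF : SimplexFree d F) (hsub : ∀ A ∈ F, A ⊆ Y) (hsize : ∀ A ∈ F, A.card ≤ Y.card - i) :
    F.card ≤ maxFreeLe Y.card d i := by
  obtain ⟨φ, hφ⟩ := exists_embedding_fin_univ_map_eq Y
  obtain ⟨G, rfl⟩ := exists_map_eq_of_forall_subset_map (φ := φ) (hφ ▸ hsub)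
  rw [card_map]
  refine le_maxFreeLe (hF.of_map_mem φ fun B hB => mem_map_of_mem _ hB) fun B hB => ?_
  simpa using hsize _ (mem_map_of_mem _ hB)

lemma card_le_maxFree {d : ℕ} {Y : Finset α} {F : Finset (Finset α)}
    (hF : SimplexFree d F) (hsub : ∀ A ∈ F, A ⊆ Y) : F.card ≤ maxFree Y.card d :=
  maxFreeLe_zero Y.card d ▸ card_le_maxFreeLe hF hsub fun A hA => card_le_card (hsub A hA)

lemma IsSimplex.snoc_union {d : ℕ} {B : Fin (d + 2) → Finset α} {Y S : Finset α}
    (hB : IsSimplex (d + 1) B) (hBY : ∀ i, B i ⊆ Y) (hS : S.Nonempty) (hSY : Disjoint S Y) :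
    IsSimplex (d + 2) (Fin.snoc (fun i => B i ∪ S) Y : Fin (d + 3) → Finset α) := by
  rw [isSimplex_iff] at hB ⊢
  obtain ⟨hempty, hcover⟩ := hB
  refine ⟨fun x => ?_, fun j => ?_⟩
  · rw [Fin.exists_fin_succ']
    simp only [Fin.snoc_castSucc, Fin.snoc_last, mem_union, not_or]
    by_cases hxY : x ∈ Y
    · obtain ⟨i, hi⟩ := hempty x
      exact Or.inl ⟨i, hi, fun hxS => disjoint_left.mp hSY hxS hxY⟩
    · exact Or.inr hxY
  · induction j using Fin.lastCases with
    | last =>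
      obtain ⟨s, hs⟩ := hS
      refine ⟨s, Fin.forall_fin_succ'.mpr ⟨fun i _ => ?_, fun h => absurd rfl h⟩⟩
      simp [hs]
    | cast j =>
      obtain ⟨x, hx⟩ := hcover j
      obtain ⟨i, hij⟩ := exists_ne j
      refine ⟨x, Fin.forall_fin_succ'.mpr ⟨fun i hi => ?_, fun _ => ?_⟩⟩
      · simp [hx i (ne_of_apply_ne _ hi)]
      · simpa using hBY i (hx i hij)

lemma SimplexFree.of_union_mem {d : ℕ} {F G : Finset (Finset α)} {Y S : Finset α}
    (hF : SimplexFree (d + 2) F) (hY : Y ∈ F) (hS : S.Nonempty) (hSY : Disjoint S Y)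
    (hG : ∀ B ∈ G, B ⊆ Y ∧ B ∪ S ∈ F) : SimplexFree (d + 1) G := by
  rintro ⟨B, hB, hs⟩
  refine hF ⟨_, Fin.forall_fin_succ'.mpr ⟨fun i => ?_, ?_⟩,
    hs.snoc_union (fun i => (hG _ (hB i)).1) hS hSY⟩
  · simpa using (hG _ (hB i)).2
  · simpa using hY

lemma card_filter_sdiff_eq_le {d : ℕ} {F : Finset (Finset α)} {Y S : Finset α}
    (hF : SimplexFree (d + 2) F) (hY : Y ∈ F) (hS : S.Nonempty) (hSY : Disjoint S Y)
    (hsize : ∀ A ∈ F, A.card ≤ Y.card) :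
    (F.filter (· \ Y = S)).card ≤ maxFreeLe Y.card (d + 1) S.card := by
  have hfiber : ∀ A ∈ F.filter (· \ Y = S), A ∈ F ∧ A ∩ Y ∪ S = A := fun A hA => by
    obtain ⟨hAF, rfl⟩ := mem_filter.mp hA
    exact ⟨hAF, sup_inf_sdiff A Y⟩
  have hinj : Set.InjOn (· ∩ Y) (F.filter (· \ Y = S) : Set (Finset α)) := by
    intro A hA A' hA' h
    rw [← (hfiber A hA).2, ← (hfiber A' hA').2]
    exact congrArg (· ∪ S) h
  rw [← card_image_of_injOn hinj]
  refine card_le_maxFreeLe (hF.of_union_mem hY hS hSY fun B hB => ?_) (fun B hB => ?_)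
    fun B hB => ?_ <;> obtain ⟨A, hA, rfl⟩ := mem_image.mp hB
  · exact ⟨inter_subset_right, (hfiber A hA).2.symm ▸ (hfiber A hA).1⟩
  · exact inter_subset_right
  · have := card_inter_add_card_sdiff A Y
    rw [(mem_filter.mp hA).2] at this
    have := hsize A (hfiber A hA).1
    omega

end

theorem stmt3_general {α : Type*} [DecidableEq α] (n k d : ℕ) (hkn : k ≤ n)
    (hd : 2 ≤ d) (X : Finset α) (hX : X.card = n) (F : Finset (Finset α))
    (hF : F ⊆ X.powerset) (hsize : ∀ A ∈ F, A.card ≤ n - k)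
    (hY : ∃ Y ∈ F, Y.card = n - k) (hfree : SimplexFree d F) :
    F.card ≤ maxFree (n - k) d +
      ∑ i ∈ Finset.Icc 1 k, k.choose i * maxFreeLe (n - k) (d - 1) i := by
  obtain ⟨d, rfl⟩ : ∃ e, d = e + 2 := ⟨d - 2, by omega⟩
  obtain ⟨Y, hYF, hYcard⟩ := hY
  have hT : (X \ Y).card = k := by
    rw [card_sdiff_of_subset (mem_powerset.mp (hF hYF)), hX, hYcard]
    omega
  rw [← hYcard] at hsize ⊢
  calc F.card = ∑ S ∈ (X \ Y).powerset, (F.filter (· \ Y = S)).card :=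
        card_eq_sum_card_fiberwise fun A hA =>
          mem_powerset.mpr (sdiff_subset_sdiff (mem_powerset.mp (hF hA)) le_rfl)
    _ ≤ (F.filter (· \ Y = ∅)).card +
          ∑ i ∈ Icc 1 k, k.choose i * maxFreeLe Y.card (d + 2 - 1) i :=
        hT ▸ sum_powerset_le fun S hS hSne =>
          card_filter_sdiff_eq_le hfree hYF hSne (disjoint_of_subset_left hS sdiff_disjoint) hsize
    _ ≤ _ := by
        gcongr
        exact card_le_maxFree (hfree.mono (filter_subset _ _)) fun A hA =>
          sdiff_eq_empty_iff_subset.mp (mem_filter.mp hA).2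

theorem stmt3 {α : Type*} [DecidableEq α] (n k d : ℕ) (hk : 1 ≤ k) (hkn : k ≤ n)
    (hd : 2 ≤ d) (X : Finset α) (hX : X.card = n) (F : Finset (Finset α))
    (hF : F ⊆ X.powerset) (hsize : ∀ A ∈ F, A.card ≤ n - k)
    (hY : ∃ Y ∈ F, Y.card = n - k) (hfree : SimplexFree d F) :
    F.card ≤ maxFree (n - k) d +
      ∑ i ∈ Finset.Icc 1 k, k.choose i * maxFreeLe (n - k) (d - 1) i :=
  stmt3_general n k d hkn hd X hX F hF hsize hY hfree
end

section
/- For any n ≥ 1, any x in an n-element set X, and any d ≥ 1, the family F = {A ⊆ X : x ∈ A} ∪ {A ⊆ X : |A| ≤ d−1} is d-simplex-free and has size 2^{n-1} + Σ_{i=0}^{d-1} C(n−1, i). -/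
open Finset

lemma card_filter_card_le {α : Type*} [DecidableEq α] (Y : Finset α) (k : ℕ) :
    (Y.powerset.filter (fun A => A.card ≤ k)).card =
      ∑ i ∈ Finset.range (k + 1), Y.card.choose i := by
  have h : Y.powerset.filter (fun A => A.card ≤ k) =
      (Finset.range (k + 1)).biUnion (fun i => Y.powersetCard i) := by
    ext A
    simp only [mem_filter, mem_powerset, mem_biUnion, Finset.mem_range, Nat.lt_succ_iff,
      mem_powersetCard]
    constructor
    · rintro ⟨h1, h2⟩; exact ⟨A.card, h2, h1, rfl⟩
    · rintro ⟨i, hi, h1, rfl⟩; exact ⟨h1, hi⟩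
  rw [h, card_biUnion]
  · simp [card_powersetCard]
  · intro i _ j _ hij
    simp only [disjoint_left, mem_powersetCard]
    rintro A ⟨_, rfl⟩ ⟨_, h⟩
    exact hij h

theorem stmt11 {α : Type*} [DecidableEq α] (n d : ℕ) (hn : 1 ≤ n) (hd : 1 ≤ d)
    (X : Finset α) (hX : X.card = n) (x : α) (hx : x ∈ X) :
    SimplexFree d (X.powerset.filter (fun A => x ∈ A) ∪
        X.powerset.filter (fun A => A.card ≤ d - 1)) ∧
    (X.powerset.filter (fun A => x ∈ A) ∪
        X.powerset.filter (fun A => A.card ≤ d - 1)).card =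
      2 ^ (n - 1) + ∑ i ∈ Finset.range d, (n - 1).choose i := by
  constructor
  · rintro ⟨A, hA, hempty, hnon⟩
    choose y hy using hnon
    have hyy : ∀ j i, i ≠ j → y j ∈ A i := by
      intro j i hij
      have := hy j
      simp only [Set.mem_iInter, Finset.mem_coe] at this
      exact this i hij
    have hyn : ∀ j, y j ∉ A j := by
      intro j hj
      have : y j ∈ ⋂ i, (A i : Set α) := Set.mem_iInter.2 fun i => by
        by_cases h : i = j
        · subst h; exact hj
        · exact hyy j i h
      rw [hempty] at this
      exact this
    have hinj : Function.Injective y := by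
      intro i i' h
      by_contra hne
      exact hyn i' (h ▸ hyy i i' (Ne.symm hne))
    have hjx : ∃ j, x ∉ A j := by
      by_contra h
      push_neg at h
      have : x ∈ ⋂ i, (A i : Set α) := Set.mem_iInter.2 fun i => h i
      rw [hempty] at this
      exact this
    obtain ⟨j, hj⟩ := hjx
    have hmem := hA j
    rw [mem_union, mem_filter, mem_filter] at hmem
    have hcard : (A j).card ≤ d - 1 := by tauto
    have hsub : ((univ : Finset (Fin (d + 1))).erase j).image y ⊆ A j := by
      intro a ha
      simp only [mem_image, mem_erase, mem_univ, and_true] at ha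
      obtain ⟨i, hij, rfl⟩ := ha
      exact hyy i j (Ne.symm hij)
    have hd2 : d ≤ (A j).card := by
      calc d = (((univ : Finset (Fin (d + 1))).erase j).image y).card := by
            rw [card_image_of_injective _ hinj, card_erase_of_mem (mem_univ j), card_univ,
              Fintype.card_fin]
            omega
        _ ≤ _ := card_le_card hsub
    omega
  · set S1 := X.powerset.filter (fun A => x ∈ A) with hS1
    set S2 := X.powerset.filter (fun A => A.card ≤ d - 1) with hS2
    set T := S2.filter (fun A => x ∉ A) with hT
    have hunion : S1 ∪ S2 = S1 ∪ T := by
      ext A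
      simp only [hS1, hS2, hT, mem_union, mem_filter, mem_powerset]
      by_cases h : x ∈ A <;> tauto
    have hdisj : Disjoint S1 T := by
      simp only [disjoint_left, hS1, hT, mem_filter]
      tauto
    have hc1 : S1.card = 2 ^ (n - 1) := by
      have himg : S1 = (X.erase x).powerset.image (insert x) := by
        ext A
        simp only [hS1, mem_filter, mem_powerset, mem_image]
        constructor
        · rintro ⟨hAX, hxA⟩
          exact ⟨A.erase x, erase_subset_erase x hAX,
            by rw [insert_erase hxA]⟩
        · rintro ⟨B, hB, rfl⟩
          exact ⟨insert_subset hx (hB.trans (erase_subset x X)), mem_insert_self _ _⟩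
      rw [himg, card_image_of_injOn, card_powerset, card_erase_of_mem hx, hX]
      intro B hB B' hB' h
      simp only [Finset.coe_powerset, Set.mem_preimage, Set.mem_powerset_iff,
        Finset.coe_subset, mem_powerset] at hB hB'
      have hxB : x ∉ B := fun hc => (notMem_erase x X) (hB hc)
      have hxB' : x ∉ B' := fun hc => (notMem_erase x X) (hB' hc)
      rw [← erase_insert hxB, ← erase_insert hxB', h]
    have hc2 : T.card = ∑ i ∈ Finset.range d, (n - 1).choose i := by
      have hTeq : T = (X.erase x).powerset.filter (fun A => A.card ≤ d - 1) := by
        ext A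
        simp only [hT, hS2, mem_filter, mem_powerset, subset_erase]
        tauto
      rw [hTeq, card_filter_card_le, card_erase_of_mem hx, hX]
      have h1 : d - 1 + 1 = d := by omega
      rw [h1]
    rw [hunion, card_union_of_disjoint hdisj, hc1, hc2]
end

section
/- For n ≥ 4, the maximum size of a 3-simplex-free family of subsets of an n-element set X all of size at most n−2 is at least 2^{n-1} + C(n−1,2), attained by the family {A ⊆ X : x ∈ A, |A| ≤ n−2} ∪ {A ⊆ X : |A| ≤ 2, x ∉ A} for any fixed x ∈ X. -/
/-!
Every member of a `d`-simplex has at least `d` elements: for each `i ≠ j` pick a point lying in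
all members but the `i`-th; these points lie in the `j`-th member and are pairwise distinct,
since a repeated point would lie in all `d + 1` members. Since some member of a simplex misses
`x`, a family whose members avoiding `x` have at most two elements is `3`-simplex-free. The
count splits into sets `insert x B` with `#B ≤ n - 3` and sets with at most two elements,
both inside `X.erase x`.
-/

open Finset

section

variable {α : Type*} [DecidableEq α]

namespace IsSimplex

variable {d : ℕ} {A : Fin (d + 1) → Finset α}

theorem exists_notMem (h : IsSimplex d A) (y : α) : ∃ i, y ∉ A i := by
  by_contra! hy
  have : y ∈ ⋂ i, (A i : Set α) := Set.mem_iInter.2 fun i => mem_coe.2 (hy i)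
  simp [h.1] at this

theorem le_card (h : IsSimplex d A) (j : Fin (d + 1)) : d ≤ #(A j) := by
  choose y hy using h.2
  have hyA : ∀ i k, k ≠ i → y i ∈ A k := fun i k hk => by
    simpa using Set.mem_iInter₂.1 (hy i) k hk
  calc d = #(univ.erase j) := by simp
    _ ≤ #(A j) := card_le_card_of_injOn y (fun i hi => hyA i j (ne_of_mem_erase hi).symm) ?_
  intro i₁ _ i₂ _ hy₁₂
  by_contra hne
  obtain ⟨k, hk⟩ := h.exists_notMem (y i₁)
  by_cases hki : k = i₁
  · subst hki
    exact hk (hy₁₂ ▸ hyA i₂ k hne)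
  · exact hk (hyA i₁ k hki)

end IsSimplex

theorem simplexFree_of_card_lt_of_notMem {d : ℕ} {F : Finset (Finset α)} (x : α)
    (hF : ∀ A ∈ F, x ∉ A → #A < d) : SimplexFree d F := by
  rintro ⟨A, hA, hs⟩
  obtain ⟨j, hj⟩ := hs.exists_notMem x
  exact (hF _ (hA j) hj).not_ge (hs.le_card j)

theorem card_powerset_filter_card_le (S : Finset α) (k : ℕ) :
    #{A ∈ S.powerset | #A ≤ k} = ∑ i ∈ range (k + 1), (#S).choose i := by
  have : {A ∈ S.powerset | #A ≤ k} = (range (k + 1)).biUnion (S.powersetCard ·) := by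
    ext A
    simp [mem_powersetCard, and_comm]
  rw [this, card_biUnion fun i _ j _ hij => S.pairwise_disjoint_powersetCard hij]
  simp only [card_powersetCard]

theorem card_powerset_filter_mem_card_le {X : Finset α} {x : α} (hx : x ∈ X) (k : ℕ) :
    #{A ∈ X.powerset | x ∈ A ∧ #A ≤ k + 1} = #{B ∈ (X.erase x).powerset | #B ≤ k} := by
  have hxB {B : Finset α} (hB : B ⊆ X.erase x) : x ∉ B := fun h => notMem_erase x X (hB h)
  refine card_nbij' (erase · x) (insert x) (fun A hA => ?_) (fun B hB => ?_)
    (fun A hA => ?_) (fun B hB => ?_) <;>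
    simp only [coe_filter, Set.mem_ofPred_eq, mem_powerset] at *
  · rw [card_erase_of_mem hA.2.1]
    exact ⟨erase_subset_erase x hA.1, by omega⟩
  · rw [card_insert_of_notMem (hxB hB.1)]
    exact ⟨insert_subset hx (hB.1.trans (erase_subset x X)), mem_insert_self x B, by omega⟩
  · exact insert_erase hA.2.1
  · exact erase_insert (hxB hB.1)

theorem powerset_filter_and_notMem (X : Finset α) (x : α) (p : Finset α → Prop) [DecidablePred p] :
    {A ∈ X.powerset | p A ∧ x ∉ A} = {A ∈ (X.erase x).powerset | p A} := by
  ext A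
  simp only [mem_filter, mem_powerset, subset_erase]
  tauto

theorem sum_range_choose_add_succ (m : ℕ) :
    ∑ i ∈ range m, (m + 1).choose i + (m + 1) + 1 = 2 ^ (m + 1) := by
  rw [← Nat.sum_range_choose, sum_range_succ, sum_range_succ, Nat.choose_succ_self_right,
    Nat.choose_self]

end

theorem stmt15 {α : Type*} [DecidableEq α] (n : ℕ) (hn : 4 ≤ n) (X : Finset α)
    (hX : X.card = n) (x : α) (hx : x ∈ X) :
    let G := X.powerset.filter (fun A => x ∈ A ∧ A.card ≤ n - 2) ∪
      X.powerset.filter (fun A => A.card ≤ 2 ∧ x ∉ A);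
    (∀ A ∈ G, A.card ≤ n - 2) ∧ SimplexFree 3 G ∧
      G.card = 2 ^ (n - 1) + (n - 1).choose 2 := by
  intro G
  have hG : ∀ A ∈ G, (x ∈ A ∧ #A ≤ n - 2) ∨ (#A ≤ 2 ∧ x ∉ A) := by
    intro A hA
    simp only [G, mem_union, mem_filter] at hA
    tauto
  refine ⟨fun A hA => ?_, simplexFree_of_card_lt_of_notMem x fun A hA hxA => ?_, ?_⟩
  · rcases hG A hA with h | h <;> omega
  · rcases hG A hA with h | h
    · exact absurd h.1 hxA
    · omega
  · have hcard : #(X.erase x) = n - 1 := by rw [card_erase_of_mem hx, hX]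
    have hn₂ : n - 3 + 1 = n - 2 := by omega
    have hsum := sum_range_choose_add_succ (n - 2)
    rw [show n - 2 + 1 = n - 1 by omega] at hsum
    rw [card_union_of_disjoint (disjoint_filter.2 fun A _ h h' => h'.2 h.1), ← hn₂,
      card_powerset_filter_mem_card_le hx, powerset_filter_and_notMem,
      card_powerset_filter_card_le, card_powerset_filter_card_le, hcard, hn₂]
    simp only [sum_range_succ, sum_range_zero, Nat.choose_zero_right, Nat.choose_one_right]
    omega
end

section
/- Suppose F is a 3-simplex-free family of subsets of an n-element set X with n ≥ 5, Y ∈ F with |Y| = n−1, and X \ Y = {z}. If {A ∈ F : z ∉ A} = {A ⊆ Y : y_1 ∈ A} ∪ {A ⊆ Y : |A| ≤ 2, y_1 ∉ A} and {A \ {z} : A ∈ F, z ∈ A} = {A ⊆ Y : y_2 ∈ A} ∪ {A ⊆ Y : |A| ≤ 1, y_2 ∉ A} for some y_1, y_2 ∈ Y, then y_1 = y_2. -/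
open Finset

theorem stmt19 {α : Type*} [DecidableEq α] (n : ℕ) (hn : 5 ≤ n) (X : Finset α)
    (hX : X.card = n) (F : Finset (Finset α)) (hF : F ⊆ X.powerset)
    (hfree : SimplexFree 3 F) (Y : Finset α) (hYF : Y ∈ F) (hYcard : Y.card = n - 1)
    (z : α) (hz : X \ Y = {z}) (y₁ y₂ : α) (hy₁ : y₁ ∈ Y) (hy₂ : y₂ ∈ Y)
    (h1 : F.filter (fun A => z ∉ A) =
      Y.powerset.filter (fun A => y₁ ∈ A) ∪
        Y.powerset.filter (fun A => A.card ≤ 2 ∧ y₁ ∉ A))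
    (h2 : (F.filter (fun A => z ∈ A)).image (fun A => A.erase z) =
      Y.powerset.filter (fun A => y₂ ∈ A) ∪
        Y.powerset.filter (fun A => A.card ≤ 1 ∧ y₂ ∉ A)) :
    y₁ = y₂ := by
  by_contra hne
  have hzY : z ∉ Y := by
    have : z ∈ X \ Y := by rw [hz]; exact mem_singleton_self z
    exact (mem_sdiff.mp this).2
  have hcard : 2 ≤ (Y \ {y₁, y₂}).card := by
    have h1' : ({y₁, y₂} : Finset α).card ≤ 2 := card_insert_le _ _ |>.trans (by simp)
    have hle := le_card_sdiff ({y₁, y₂} : Finset α) Y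
    omega
  obtain ⟨a, ha, b, hb, hab⟩ := one_lt_card.mp (by omega : 1 < (Y \ {y₁, y₂}).card)
  obtain ⟨haY, ha'⟩ := mem_sdiff.mp ha
  obtain ⟨hbY, hb'⟩ := mem_sdiff.mp hb
  simp only [mem_insert, mem_singleton, not_or] at ha' hb'
  have hy₁z : y₁ ≠ z := fun h => hzY (h ▸ hy₁)
  have haz : a ≠ z := fun h => hzY (h ▸ haY)
  have hbz : b ≠ z := fun h => hzY (h ▸ hbY)
  have hy₁a : y₁ ≠ a := fun h => ha'.1 h.symm
  have hy₁b : y₁ ≠ b := fun h => hb'.1 h.symm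
  have hba : b ≠ a := fun h => hab h.symm
  have key : ∀ c ∈ Y, c ≠ y₂ → insert z (Y.erase c) ∈ F := by
    intro c hcY hc
    have hmem : Y.erase c ∈ Y.powerset.filter (fun A => y₂ ∈ A) ∪
        Y.powerset.filter (fun A => A.card ≤ 1 ∧ y₂ ∉ A) := by
      apply mem_union_left
      simp only [mem_filter, mem_powerset]
      exact ⟨erase_subset _ _, mem_erase.mpr ⟨fun h => hc h.symm, hy₂⟩⟩
    rw [← h2] at hmem
    obtain ⟨A, hA, hAe⟩ := mem_image.mp hmem
    obtain ⟨hAF, hzA⟩ := mem_filter.mp hA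
    have : insert z (Y.erase c) = A := by rw [← hAe, insert_erase hzA]
    rwa [this]
  have h0F : ({y₁, a, b} : Finset α) ∈ F := by
    have hmem : ({y₁, a, b} : Finset α) ∈ F.filter (fun A => z ∉ A) := by
      rw [h1]
      apply mem_union_left
      simp only [mem_filter, mem_powerset]
      constructor
      · intro x hx
        simp only [mem_insert, mem_singleton] at hx
        rcases hx with rfl | rfl | rfl <;> assumption
      · simp
    exact (mem_filter.mp hmem).1
  have hA1F : insert z (Y.erase y₁) ∈ F := key y₁ hy₁ hne
  have hA2F : insert z (Y.erase a) ∈ F := key a haY ha'.2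
  have hA3F : insert z (Y.erase b) ∈ F := key b hbY hb'.2
  apply hfree
  refine ⟨![{y₁, a, b}, insert z (Y.erase y₁), insert z (Y.erase a), insert z (Y.erase b)],
    ?_, ?_, ?_⟩
  · intro i; fin_cases i <;> assumption
  · ext x
    simp only [Set.mem_iInter, Set.mem_empty_iff_false, iff_false, not_forall]
    by_cases hx0 : x ∈ ({y₁, a, b} : Finset α)
    · simp only [mem_insert, mem_singleton] at hx0
      rcases hx0 with rfl | rfl | rfl
      · exact ⟨1, by simp [hy₁z]⟩
      · exact ⟨2, by simp [haz]⟩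
      · exact ⟨3, by simp [hbz]⟩
    · exact ⟨0, by simpa using hx0⟩
  · intro j
    fin_cases j
    · refine ⟨z, ?_⟩
      simp only [Set.mem_iInter]
      intro i hi
      fin_cases i
      · exact absurd rfl hi
      all_goals simp
    · refine ⟨y₁, ?_⟩
      simp only [Set.mem_iInter]
      intro i hi
      fin_cases i
      · simp
      · exact absurd rfl hi
      · simp [hy₁, hy₁a]
      · simp [hy₁, hy₁b]
    · refine ⟨a, ?_⟩
      simp only [Set.mem_iInter]
      intro i hi
      fin_cases i
      · simp
      · simp [haY, ha'.1]
      · exact absurd rfl hi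
      · simp [haY, hab]
    · refine ⟨b, ?_⟩
      simp only [Set.mem_iInter]
      intro i hi
      fin_cases i
      · simp
      · simp [hbY, hb'.1]
      · simp [hbY, hba]
      · exact absurd rfl hi
end
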